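/- Let M ≥ 1 and let A, B, a_2, …, a_{M+3}, b_2, …, b_{M+3} be nonzero complex numbers with A a_2 ⋯ a_{M+3} = q² B b_2 ⋯ b_{M+3}. For x ∈ ℂ, x ≠ 0, satisfying the genericity conditions B x/a_i ∉ q^ℤ (for i = 2, …, M+3), A x/b_i ∉ q^ℤ (for i = 2, …, M+3), A/B ∉ q^ℤ, a_k/(A x) ∉ q^ℤ, a_k/(B x) ∉ q^ℤ, a_k/a_i ∉ q^ℤ (i ≠ k, i, k ≥ 2), a_k/b_i ∉ q^ℤ and A x/a_i ∉ q^ℤ, fix k ∈ {2, …, M+3} and define g_k(x) = (a_k/(A x))² · θ(a_k/(B x)) · ∏_{i=2}^{M+3} θ(a_k/b_i) · ∏_{i=2}^{M+3} θ(A x/a_i) / [ θ(A/B) · ∏_{i=2}^{M+3} θ(A x/b_i) · θ(a_k/(A x)) · ∏_{2 ≤ i ≤ M+3, i ≠ k} θ(a_k/a_i) ] (this is the connection coefficient C̃_k of the main theorem with a_1 = A x and b_1 = B x). Then g_k is a pseudo-constant: g_k(q x) = g_k(x). -/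

import Mathlib

/-- The infinite q-Pochhammer symbol `(a)_∞ = ∏_{i=0}^∞ (1 - a qⁱ)`. -/
noncomputable def qPochInf (q a : ℂ) : ℂ := ∏' i : ℕ, (1 - a * q ^ i)

/-- The theta function `θ(x) = (x)_∞ (q/x)_∞`. -/
noncomputable def qTheta (q x : ℂ) : ℂ := qPochInf q x * qPochInf q (q / x)

/-- The set `q^ℤ = {q^m : m ∈ ℤ}`. -/
def qPowZ (q : ℂ) : Set ℂ := {x | ∃ m : ℤ, x = q ^ m}

set_option maxHeartbeats 1000000

lemma summable_log_poch (q : ℂ) (hq1 : ‖q‖ < 1) (c : ℂ) :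
    Summable (fun i : ℕ => Complex.log (1 - c * q ^ i)) := by
  have hgeo : Summable (fun i : ℕ => (3/2 : ℝ) * (‖c‖ * ‖q‖ ^ i)) := by
    exact ((summable_geometric_of_lt_one (by positivity) hq1).mul_left
      ((3/2 : ℝ) * ‖c‖)).congr (fun i => by ring)
  refine hgeo.of_norm_bounded_eventually_nat ?_
  have h0 : Filter.Tendsto (fun i : ℕ => ‖c‖ * ‖q‖ ^ i)
      Filter.atTop (nhds 0) := by
    simpa using (tendsto_pow_atTop_nhds_zero_of_lt_one (norm_nonneg q) hq1).const_mul
      (‖c‖)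
  have hev : ∀ᶠ i : ℕ in Filter.atTop, ‖c‖ * ‖q‖ ^ i ≤ 1/2 := by
    have := h0.eventually (eventually_le_nhds (by norm_num : (0:ℝ) < 1/2))
    simpa using this
  filter_upwards [hev] with i hi
  have hz : ‖(-(c * q ^ i) : ℂ)‖ ≤ 1/2 := by
    simpa [norm_mul, norm_pow] using hi
  have := Complex.norm_log_one_add_half_le_self hz
  simpa [sub_eq_add_neg, norm_mul, norm_pow] using this

lemma multipliable_poch (q : ℂ) (hq1 : ‖q‖ < 1) (c : ℂ)
    (hc : ∀ i : ℕ, c * q ^ i ≠ 1) :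
    Multipliable (fun i : ℕ => 1 - c * q ^ i) := by
  exact Complex.multipliable_of_summable_log (f := fun i : ℕ => 1 - c * q ^ i)
    (summable_log_poch q hq1 c)

lemma poch_ne_zero (q : ℂ) (hq1 : ‖q‖ < 1) (c : ℂ)
    (hc : ∀ i : ℕ, c * q ^ i ≠ 1) : qPochInf q c ≠ 0 := by
  have h := Complex.cexp_tsum_eq_tprod (f := fun i : ℕ => 1 - c * q ^ i)
    (fun i => sub_ne_zero.mpr (hc i).symm) (summable_log_poch q hq1 c)
  rw [qPochInf, ← h]
  exact Complex.exp_ne_zero _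

lemma poch_shift (q : ℂ) (hq1 : ‖q‖ < 1) (c : ℂ)
    (hc : ∀ i : ℕ, c * q ^ i ≠ 1) :
    qPochInf q c = (1 - c) * qPochInf q (q * c) := by
  have hm : Multipliable (fun i : ℕ => 1 - (q * c) * q ^ i) :=
    multipliable_poch q hq1 (q * c)
      (fun i h => hc (i + 1) (by rw [pow_succ]; linear_combination h))
  have hm' : Multipliable (fun i : ℕ => 1 - c * q ^ (i + 1)) :=
    hm.congr (fun i => by rw [pow_succ]; ring)
  rw [qPochInf, tprod_eq_zero_mul' hm', qPochInf]
  congr 1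
  · rw [pow_zero, mul_one]
  · exact tprod_congr (fun i => by rw [pow_succ]; ring)

lemma qPowZ_iff (q : ℂ) (hq0 : q ≠ 0) {y : ℂ} (h : y ∉ qPowZ q) :
    (∀ i : ℕ, y * q ^ i ≠ 1) ∧ (∀ i : ℕ, (q / y) * q ^ i ≠ 1) := by
  constructor
  · intro i hi
    exact h ⟨-(i : ℤ), by
      rw [zpow_neg, zpow_natCast]
      exact eq_inv_of_mul_eq_one_left hi⟩
  · intro i hi
    have hy : y ≠ 0 := by
      intro h0
      rw [h0] at hi
      simp at hi
    exact h ⟨(i : ℤ) + 1, by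
      rw [zpow_add₀ hq0, zpow_natCast, zpow_one]
      field_simp at hi
      linear_combination -hi⟩

lemma theta_ne_zero (q : ℂ) (hq0 : q ≠ 0) (hq1 : ‖q‖ < 1) {y : ℂ}
    (h : y ∉ qPowZ q) : qTheta q y ≠ 0 := by
  obtain ⟨h1, h2⟩ := qPowZ_iff q hq0 h
  exact mul_ne_zero (poch_ne_zero q hq1 _ h1) (poch_ne_zero q hq1 _ h2)

lemma theta_shift (q : ℂ) (hq0 : q ≠ 0) (hq1 : ‖q‖ < 1) (y : ℂ) (hy : y ≠ 0)
    (h : y ∉ qPowZ q) : qTheta q (q * y) = -y⁻¹ * qTheta q y := by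
  obtain ⟨hy1, hy4⟩ := qPowZ_iff q hq0 h
  have hy2 : ∀ i : ℕ, y⁻¹ * q ^ i ≠ 1 := by
    intro i hi
    refine h ⟨(i : ℤ), ?_⟩
    rw [zpow_natCast]
    have := eq_inv_of_mul_eq_one_left hi
    exact inv_injective this
  have e1 : qPochInf q y = (1 - y) * qPochInf q (q * y) := poch_shift q hq1 y hy1
  have e2 : qPochInf q y⁻¹ = (1 - y⁻¹) * qPochInf q (q / y) := by
    have := poch_shift q hq1 y⁻¹ hy2
    rwa [show q * y⁻¹ = q / y from (div_eq_mul_inv q y).symm] at this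
  have hne1 : y ≠ 1 := fun hh => hy1 0 (by rw [hh, pow_zero, mul_one])
  have hy1' : (1 : ℂ) - y ≠ 0 := sub_ne_zero.mpr (Ne.symm hne1)
  rw [qTheta, show q / (q * y) = y⁻¹ by field_simp, e2, qTheta]
  rw [e1]
  field_simp
  ring

lemma theta_shift' (q : ℂ) (hq0 : q ≠ 0) (hq1 : ‖q‖ < 1) (y : ℂ) (hy : y ≠ 0)
    (h : y ∉ qPowZ q) : qTheta q y = -y * qTheta q (q * y) := by
  rw [theta_shift q hq0 hq1 y hy h]
  field_simp

lemma notmem_div_q (q : ℂ) (hq0 : q ≠ 0) {y : ℂ} (h : y ∉ qPowZ q) : y / q ∉ qPowZ q := by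
  rintro ⟨m, hm⟩
  exact h ⟨m + 1, by
    rw [zpow_add₀ hq0, zpow_one, ← hm]
    field_simp⟩

/-- The connection coefficient `C̃_k` with `a₁ = Ax`, `b₁ = Bx`, as a function
`g_k` of `x`, is a pseudo-constant: `g_k(qx) = g_k(x)`.
Here `a, b : Fin (M+2) → ℂ` hold the paper's `a₂,…,a_{M+3}` and `b₂,…,b_{M+3}`. -/
theorem connection_coefficient_pseudo_constant
    (q : ℂ) (hq0 : 0 < ‖q‖) (hq1 : ‖q‖ < 1)
    (M : ℕ) (hM : 1 ≤ M)
    (A B : ℂ) (hA : A ≠ 0) (hB : B ≠ 0)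
    (a b : Fin (M + 2) → ℂ)
    (ha : ∀ i, a i ≠ 0) (hb : ∀ i, b i ≠ 0)
    (hbal : A * ∏ i, a i = q ^ 2 * B * ∏ i, b i)
    (x : ℂ) (hx : x ≠ 0)
    (h1 : ∀ i, B * x / a i ∉ qPowZ q)
    (h2 : ∀ i, A * x / b i ∉ qPowZ q)
    (h3 : A / B ∉ qPowZ q)
    (k : Fin (M + 2))
    (h4 : a k / (A * x) ∉ qPowZ q)
    (h5 : a k / (B * x) ∉ qPowZ q)
    (h6 : ∀ i, i ≠ k → a k / a i ∉ qPowZ q)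
    (h7 : ∀ i, a k / b i ∉ qPowZ q)
    (h8 : ∀ i, A * x / a i ∉ qPowZ q) :
    (fun x' : ℂ =>
        (a k / (A * x')) ^ 2 * qTheta q (a k / (B * x')) *
            (∏ i, qTheta q (a k / b i)) * (∏ i, qTheta q (A * x' / a i)) /
          (qTheta q (A / B) * (∏ i, qTheta q (A * x' / b i)) *
            qTheta q (a k / (A * x')) *
            ∏ i ∈ Finset.univ \ {k}, qTheta q (a k / a i)))
      (q * x)
    = (fun x' : ℂ =>
        (a k / (A * x')) ^ 2 * qTheta q (a k / (B * x')) *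
            (∏ i, qTheta q (a k / b i)) * (∏ i, qTheta q (A * x' / a i)) /
          (qTheta q (A / B) * (∏ i, qTheta q (A * x' / b i)) *
            qTheta q (a k / (A * x')) *
            ∏ i ∈ Finset.univ \ {k}, qTheta q (a k / a i)))
      x := by
  have hq : q ≠ 0 := fun h => by simp [h] at hq0
  have hAx : A * x ≠ 0 := mul_ne_zero hA hx
  have hBx : B * x ≠ 0 := mul_ne_zero hB hx
  dsimp only
  -- rewrite the four `x'`-dependent theta factors at `q*x`
  have eB : qTheta q (a k / (B * (q * x)))
      = -(a k / (B * (q * x))) * qTheta q (a k / (B * x)) := by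
    have hne : a k / (B * (q * x)) ≠ 0 :=
      div_ne_zero (ha k) (mul_ne_zero hB (mul_ne_zero hq hx))
    have hmem : a k / (B * (q * x)) ∉ qPowZ q := by
      have := notmem_div_q q hq h5
      rwa [show a k / (B * x) / q = a k / (B * (q * x)) by ring] at this
    have := theta_shift' q hq hq1 _ hne hmem
    rwa [show q * (a k / (B * (q * x))) = a k / (B * x) by field_simp] at this
  have eA : qTheta q (a k / (A * (q * x)))
      = -(a k / (A * (q * x))) * qTheta q (a k / (A * x)) := by
    have hne : a k / (A * (q * x)) ≠ 0 :=
      div_ne_zero (ha k) (mul_ne_zero hA (mul_ne_zero hq hx))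
    have hmem : a k / (A * (q * x)) ∉ qPowZ q := by
      have := notmem_div_q q hq h4
      rwa [show a k / (A * x) / q = a k / (A * (q * x)) by ring] at this
    have := theta_shift' q hq hq1 _ hne hmem
    rwa [show q * (a k / (A * (q * x))) = a k / (A * x) by field_simp] at this
  have ePa : (∏ i, qTheta q (A * (q * x) / a i))
      = ∏ i, ((-(A * x)⁻¹ * a i) * qTheta q (A * x / a i)) := by
    refine Finset.prod_congr rfl (fun i _ => ?_)
    rw [show A * (q * x) / a i = q * (A * x / a i) by ring,
      theta_shift q hq hq1 _ (div_ne_zero hAx (ha i)) (h8 i)]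
    congr 1
    field_simp
  have ePb : (∏ i, qTheta q (A * (q * x) / b i))
      = ∏ i, ((-(A * x)⁻¹ * b i) * qTheta q (A * x / b i)) := by
    refine Finset.prod_congr rfl (fun i _ => ?_)
    rw [show A * (q * x) / b i = q * (A * x / b i) by ring,
      theta_shift q hq hq1 _ (div_ne_zero hAx (hb i)) (h2 i)]
    congr 1
    field_simp
  rw [eB, eA, ePa, ePb, Finset.prod_mul_distrib, Finset.prod_mul_distrib,
    Finset.prod_mul_distrib, Finset.prod_mul_distrib, Finset.prod_const]
  -- nonvanishing of denominator factors
  have hTAB : qTheta q (A / B) ≠ 0 := theta_ne_zero q hq hq1 h3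
  have hTa : qTheta q (a k / (A * x)) ≠ 0 := theta_ne_zero q hq hq1 h4
  have hPFb : (∏ i, qTheta q (A * x / b i)) ≠ 0 :=
    Finset.prod_ne_zero_iff.mpr (fun i _ => theta_ne_zero q hq hq1 (h2 i))
  have hPd : (∏ i ∈ Finset.univ \ {k}, qTheta q (a k / a i)) ≠ 0 := by
    refine Finset.prod_ne_zero_iff.mpr (fun i hi => ?_)
    have : i ≠ k := by
      simp only [Finset.mem_sdiff, Finset.mem_singleton] at hi
      exact hi.2
    exact theta_ne_zero q hq hq1 (h6 i this)
  have hcard : (Finset.univ : Finset (Fin (M + 2))).card = M + 2 := by simp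
  rw [hcard]
  have hPbb : (∏ i, b i) = A * (∏ i, a i) / (q ^ 2 * B) := by
    field_simp
    linear_combination -hbal
  rw [hPbb]
  set Pa := ∏ i, a i with hPadef
  set E := (-(A * x)⁻¹) ^ (M + 2) with hEdef
  set T1 := qTheta q (a k / (B * x)) with hT1
  set T2 := ∏ i, qTheta q (a k / b i) with hT2
  set T3 := ∏ i, qTheta q (A * x / a i) with hT3
  set T4 := qTheta q (A / B) with hT4
  set T5 := ∏ i, qTheta q (A * x / b i) with hT5
  set T6 := qTheta q (a k / (A * x)) with hT6
  set T7 := ∏ i ∈ Finset.univ \ {k}, qTheta q (a k / a i) with hT7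
  have hE : E ≠ 0 := by
    rw [hEdef]
    exact pow_ne_zero _ (neg_ne_zero.mpr (inv_ne_zero hAx))
  have hPa : Pa ≠ 0 := by
    rw [hPadef]
    exact Finset.prod_ne_zero_iff.mpr (fun i _ => ha i)
  clear_value Pa E T1 T2 T3 T4 T5 T6 T7
  rw [div_eq_div_iff
    (by field_simp; simp [mul_eq_zero, hTAB, hPFb, hTa, hPd, hE, hPa, hA, ha k, hq, hB, hx])
    (by simp [mul_eq_zero, hTAB, hPFb, hTa, hPd])]
  field_simp
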